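/- arXiv:1912.04360 — 3 statements merged into one kernel-verified Lean document; each statement's English description precedes it below -/
import Mathlib

section
/- With the setup of a group Π, normal subgroup Π̃ with quotient Γ, section γ: Γ → Π with γ(1)=1, group G, homomorphism ψ: Γ → Aut(G), a homomorphism ρ̃: Π̃ → G, and a family (h_σ)_{σ∈Γ} in G satisfying ψ(σ)(ρ̃(γ(σ)⁻¹ α γ(σ))) = h_σ ρ̃(α) h_σ⁻¹ for all α ∈ Π̃: the formulas ρ(η·γ(σ)) := ρ̃(η)·h_σ⁻¹·s(σ) (for η ∈ Π̃, σ ∈ Γ) define a group homomorphism ρ: Π → G⋊Γ if and only if h_1 = 1 and for all σ₁, σ₂ ∈ Γ, ρ̃(γ(σ₁)γ(σ₂)γ(σ₁σ₂)⁻¹) = h_{σ₁}⁻¹ · ψ(σ₁)(h_{σ₂}⁻¹) · h_{σ₁σ₂}. -/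
/-!
Every `p : P` factors uniquely as `η * γ σ` with `η ∈ π.ker`, so the formula pins `ρ` down to
`p ↦ φ η * r σ`, here with `φ = inl ∘ ρ̃` and `r σ = (inl (h σ))⁻¹ * inr σ`; the only question is
whether this map is multiplicative. From
`(η₁ * γ σ₁) * (η₂ * γ σ₂) = η₁ * (γ σ₁ * η₂ * (γ σ₁)⁻¹) * c σ₁ σ₂ * γ (σ₁ * σ₂)`, where
`c σ₁ σ₂ = γ σ₁ * γ σ₂ * (γ (σ₁ * σ₂))⁻¹`, and the invariance of `(ρ̃, h)`, which says that
conjugation by `γ σ` on `π.ker` matches conjugation by `r σ` under `φ`, multiplicativity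
becomes `φ (c σ₁ σ₂) * r (σ₁ * σ₂) = r σ₁ * r σ₂`. In `G ⋊ Γ` this is the stated cocycle
identity, and `r 1 = 1` is `h 1 = 1`.
-/

open SemidirectProduct

section SectionLift

variable {P Γ H : Type*} [Group P] [Group Γ] [Group H] {π : P →* Γ} {γ : Γ → P}

lemma mul_inv_section_mem_ker (hγ : ∀ σ, π (γ σ) = σ) (p : P) :
    p * (γ (π p))⁻¹ ∈ π.ker := by
  rw [MonoidHom.mem_ker, map_mul, map_inv, hγ, mul_inv_cancel]

lemma section_mul_section_mul_inv_mem_ker (hγ : ∀ σ, π (γ σ) = σ) (σ₁ σ₂ : Γ) :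
    γ σ₁ * γ σ₂ * (γ (σ₁ * σ₂))⁻¹ ∈ π.ker := by
  simp only [MonoidHom.mem_ker, map_mul, map_inv, hγ, mul_inv_cancel]

def kerPart (hγ : ∀ σ, π (γ σ) = σ) (p : P) : π.ker :=
  ⟨p * (γ (π p))⁻¹, mul_inv_section_mem_ker hγ p⟩

lemma kerPart_mul_section (hγ : ∀ σ, π (γ σ) = σ) {η : P} (hη : η ∈ π.ker) (σ : Γ) :
    kerPart hγ (η * γ σ) = ⟨η, hη⟩ := by
  have : π (η * γ σ) = σ := by rw [map_mul, hγ, MonoidHom.mem_ker.mp hη, one_mul]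
  ext
  simp [kerPart, this]

lemma kerPart_one (hγ : ∀ σ, π (γ σ) = σ) (hγ1 : γ 1 = 1) : kerPart hγ 1 = 1 := by
  ext
  simp [kerPart, hγ1]

lemma kerPart_mul (hγ : ∀ σ, π (γ σ) = σ) (p q : P) :
    kerPart hγ (p * q) = kerPart hγ p
      * ⟨γ (π p) * (kerPart hγ q : P) * (γ (π p))⁻¹, π.normal_ker.conj_mem _ (kerPart hγ q).2 _⟩
      * ⟨_, section_mul_section_mul_inv_mem_ker hγ (π p) (π q)⟩ := by
  ext
  simp only [kerPart, map_mul, Subgroup.coe_mul]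
  group

def liftAlongSection (hγ : ∀ σ, π (γ σ) = σ) (φ : π.ker →* H) (r : Γ → H) (p : P) : H :=
  φ (kerPart hγ p) * r (π p)

theorem exists_monoidHom_apply_mul_section_iff (hγ : ∀ σ, π (γ σ) = σ) (hγ1 : γ 1 = 1)
    (φ : π.ker →* H) (r : Γ → H)
    (hφ : ∀ (σ : Γ) (α : π.ker), φ ⟨(γ σ)⁻¹ * (α : P) * γ σ,
      by simpa using π.normal_ker.conj_mem _ α.2 (γ σ)⁻¹⟩ = (r σ)⁻¹ * φ α * r σ) :
    (∃ ρ : P →* H, ∀ (η : P) (hη : η ∈ π.ker) (σ : Γ), ρ (η * γ σ) = φ ⟨η, hη⟩ * r σ) ↔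
      (r 1 = 1 ∧ ∀ σ₁ σ₂ : Γ,
        φ ⟨_, section_mul_section_mul_inv_mem_ker hγ σ₁ σ₂⟩ * r (σ₁ * σ₂) = r σ₁ * r σ₂) := by
  constructor
  · rintro ⟨ρ, hρ⟩
    have hρ_section (σ : Γ) : ρ (γ σ) = r σ := by
      have := hρ 1 (one_mem _) σ
      rwa [one_mul, (Subgroup.mk_eq_one _).mpr rfl, map_one, one_mul] at this
    refine ⟨by rw [← hρ_section, hγ1, map_one], fun σ₁ σ₂ => ?_⟩
    rw [← hρ_section σ₁, ← hρ_section σ₂, ← map_mul, ← hρ, inv_mul_cancel_right]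
  · rintro ⟨hr1, hcocycle⟩
    refine ⟨{ toFun := liftAlongSection hγ φ r, map_one' := ?_, map_mul' := ?_ }, ?_⟩
    · simp [liftAlongSection, kerPart_one hγ hγ1, hr1]
    · have hφ_conj (σ : Γ) (β : π.ker) :
          φ ⟨_, π.normal_ker.conj_mem _ β.2 (γ σ)⟩ = r σ * φ β * (r σ)⁻¹ := by
        have := hφ σ ⟨_, π.normal_ker.conj_mem _ β.2 (γ σ)⟩
        simp only [mul_assoc, inv_mul_cancel_left, inv_mul_cancel, mul_one] at this
        rw [this]
        group
      intro p q
      simp only [liftAlongSection]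
      rw [kerPart_mul, map_mul, map_mul, hφ_conj, mul_assoc _ _ (r _), map_mul π, hcocycle]
      group
    · intro η hη σ
      have : π (η * γ σ) = σ := by rw [map_mul, hγ, MonoidHom.mem_ker.mp hη, one_mul]
      simp [liftAlongSection, kerPart_mul_section hγ hη, this]

end SectionLift

section SemidirectProduct

variable {G Γ : Type*} [Group G] [Group Γ] {ψ : Γ →* MulAut G}

lemma inl_eq_conj_inl_iff {g x y : G} {σ : Γ} :
    (inl y : G ⋊[ψ] Γ) = ((inl g)⁻¹ * inr σ)⁻¹ * inl x * ((inl g)⁻¹ * inr σ) ↔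
      ψ σ y = g * x * g⁻¹ := by
  have hconj : ((inl g)⁻¹ * inr σ)⁻¹ * inl x * ((inl g)⁻¹ * inr σ) =
      (inl ((ψ σ)⁻¹ (g * x * g⁻¹)) : G ⋊[ψ] Γ) := by
    rw [inl_aut_inv, map_mul, map_mul, map_inv inl g, map_inv inr σ]
    group
  rw [hconj, inl_inj, eq_comm, eq_comm (b := g * x * g⁻¹)]
  exact MulEquiv.symm_apply_eq _

lemma inl_mul_inv_inl_mul_inr_eq_iff {c g₁ g₂ g₁₂ : G} {σ₁ σ₂ : Γ} :
    (inl c : G ⋊[ψ] Γ) * (inl g₁₂)⁻¹ * inr (σ₁ * σ₂) =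
        (inl g₁)⁻¹ * inr σ₁ * (inl g₂)⁻¹ * inr σ₂ ↔
      c = g₁⁻¹ * ψ σ₁ g₂⁻¹ * g₁₂ := by
  rw [SemidirectProduct.ext_iff]
  simp [mul_inv_eq_iff_eq_mul]

lemma inv_inl_mul_inr_one_eq_one_iff {g : G} : (inl g : G ⋊[ψ] Γ)⁻¹ * inr 1 = 1 ↔ g = 1 := by
  rw [map_one, mul_one, inv_eq_one, map_eq_one_iff _ inl_injective]

end SemidirectProduct

/-- given a `(Γ,ψ)`-invariant pair `(ρ̃, h)`, the formulas
`ρ (η * γ σ) = ρ̃ η * (h σ)⁻¹ * s σ` define a group homomorphism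
`ρ : Π → G ⋊ Γ` iff `h 1 = 1` and the cocycle-type condition
`ρ̃ (γ σ₁ * γ σ₂ * γ (σ₁σ₂)⁻¹) = (h σ₁)⁻¹ * ψ σ₁ ((h σ₂)⁻¹) * h (σ₁σ₂)` holds. -/
theorem stmt1 {P G Γ : Type*} [Group P] [Group G] [Group Γ]
    (ψ : Γ →* MulAut G) (π : P →* Γ)
    (γ : Γ → P) (hγ : ∀ σ, π (γ σ) = σ) (hγ1 : γ 1 = 1)
    (ρt : π.ker →* G) (h : Γ → G)
    (hinv : ∀ (σ : Γ) (α : π.ker),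
      ψ σ (ρt ⟨(γ σ)⁻¹ * (α : P) * γ σ, by
          have hk : π (α : P) = 1 := MonoidHom.mem_ker.mp α.2
          rw [MonoidHom.mem_ker]
          simp [map_mul, map_inv, hγ, hk]⟩)
        = h σ * ρt α * (h σ)⁻¹) :
    (∃ ρ : P →* G ⋊[ψ] Γ, ∀ (η : P) (hη : η ∈ π.ker) (σ : Γ),
        ρ (η * γ σ) = inl (ρt ⟨η, hη⟩) * (inl (h σ))⁻¹ * inr σ)
      ↔ (h 1 = 1 ∧ ∀ σ₁ σ₂ : Γ,
          ρt ⟨γ σ₁ * γ σ₂ * (γ (σ₁ * σ₂))⁻¹, by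
              rw [MonoidHom.mem_ker]
              simp only [map_mul, map_inv, hγ]
              group⟩
            = (h σ₁)⁻¹ * ψ σ₁ ((h σ₂)⁻¹) * h (σ₁ * σ₂)) := by
  have key := exists_monoidHom_apply_mul_section_iff hγ hγ1 (inl.comp ρt)
    (fun σ => (inl (h σ))⁻¹ * inr σ) fun σ α => inl_eq_conj_inl_iff.mpr (hinv σ α)
  simp only [MonoidHom.comp_apply, ← mul_assoc] at key
  rw [key, inv_inl_mul_inr_one_eq_one_iff]
  exact and_congr_right' (forall₂_congr fun σ₁ σ₂ => inl_mul_inv_inl_mul_inr_eq_iff)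
end

section
/- Let G be a group, Γ a group, ψ: Γ → Aut(G) producing a (Γ,ψ)-invariant pair (ρ̃, h_*), and let γ, γ': Γ → Π be two set-theoretic sections of Π → Γ with γ(1) = γ'(1) = 1. Set δ_σ = γ(σ)⁻¹γ'(σ) ∈ Π̃. Then (ρ̃, (ψ(σ)(ρ̃(δ_σ⁻¹))·h_σ)_σ) is a (Γ,ψ)-invariant pair with respect to the section γ'. -/
/-- if `(ρ̃, h)` is a `(Γ,ψ)`-invariant pair w.r.t. the section `γ`, and
`γ'` is another section with `γ' 1 = 1`, then setting `δ σ = γ σ⁻¹ * γ' σ ∈ Π̃`, the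
pair `(ρ̃, (ψ σ (ρ̃ (δ σ)⁻¹) * h σ))` is `(Γ,ψ)`-invariant w.r.t. `γ'`. -/
theorem stmt5 {P G Γ : Type*} [Group P] [Group G] [Group Γ]
    (ψ : Γ →* MulAut G) (π : P →* Γ) (hπ : Function.Surjective π)
    (γ γ' : Γ → P) (hγ : ∀ σ, π (γ σ) = σ) (hγ' : ∀ σ, π (γ' σ) = σ)
    (hγ1 : γ 1 = 1) (hγ'1 : γ' 1 = 1)
    (ρt : π.ker →* G) (h : Γ → G)
    (hinv : ∀ (σ : Γ) (α : π.ker),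
      ψ σ (ρt ⟨(γ σ)⁻¹ * (α : P) * γ σ, by
          have hk : π (α : P) = 1 := MonoidHom.mem_ker.mp α.2
          rw [MonoidHom.mem_ker]
          simp [map_mul, map_inv, hγ, hk]⟩)
        = h σ * ρt α * (h σ)⁻¹) :
    ∀ (σ : Γ) (α : π.ker),
      ψ σ (ρt ⟨(γ' σ)⁻¹ * (α : P) * γ' σ, by
          have hk : π (α : P) = 1 := MonoidHom.mem_ker.mp α.2
          rw [MonoidHom.mem_ker]
          simp [map_mul, map_inv, hγ', hk]⟩)
        = (ψ σ ((ρt ⟨(γ σ)⁻¹ * γ' σ, by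
              rw [MonoidHom.mem_ker]
              simp [map_mul, map_inv, hγ, hγ']⟩)⁻¹) * h σ)
          * ρt α *
          (ψ σ ((ρt ⟨(γ σ)⁻¹ * γ' σ, by
              rw [MonoidHom.mem_ker]
              simp [map_mul, map_inv, hγ, hγ']⟩)⁻¹) * h σ)⁻¹ := by
  
  intro σ α
  have hδmem : (γ σ)⁻¹ * γ' σ ∈ π.ker := by
    rw [MonoidHom.mem_ker]; simp [map_mul, map_inv, hγ, hγ']
  have hβmem : (γ σ)⁻¹ * (α : P) * γ σ ∈ π.ker := by
    have hk : π (α : P) = 1 := MonoidHom.mem_ker.mp α.2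
    rw [MonoidHom.mem_ker]; simp [map_mul, map_inv, hγ, hk]
  set δ : π.ker := ⟨(γ σ)⁻¹ * γ' σ, hδmem⟩ with hδ
  set β : π.ker := ⟨(γ σ)⁻¹ * (α : P) * γ σ, hβmem⟩ with hβ
  have key : (⟨(γ' σ)⁻¹ * (α : P) * γ' σ, by
      have hk : π (α : P) = 1 := MonoidHom.mem_ker.mp α.2
      rw [MonoidHom.mem_ker]
      simp [map_mul, map_inv, hγ', hk]⟩ : π.ker) = δ⁻¹ * β * δ := by
    apply Subtype.ext
    simp [hδ, hβ, mul_assoc]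
  rw [key]
  simp only [map_mul, map_inv]
  rw [hinv σ α]
  group
end

section
/- Let k be algebraically closed of characteristic 0 (or ≠ 2), n = 2m even, G = GL_n(k). Let σ_s(g) = J·(gᵀ)⁻¹·J⁻¹ where J = t·J₀ with (J₀)_{ij} = δ_{i,n+1−j} and t = diag(1,…,1,−1,…,−1) (m ones then m minus-ones), and let σ_o(g) = J₀·(gᵀ)⁻¹·J₀⁻¹. Then the semidirect products G⋊⟨σ_s⟩ and G⋊⟨σ_o⟩ are not isomorphic: there exists no group isomorphism between them restricting to the identity (or any automorphism) on G. -/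
/-!
An isomorphism `e` as in the statement sends `σ_s` to some `(Y, σ_o)`, and then `φ` intertwines
`σ_s` with `θ = Ad Y ∘ σ_o`; moreover `(Y, σ_o)² = 1` makes `B = Y J₀` symmetric. Hence `φ`
maps the fixed points of `σ_s`, the symplectic group of `J`, onto those of `θ`, the orthogonal
group of `B`. In a symplectic group every involution is a square: split off hyperbolic planes on
which it acts as `-1`, and take the rotation `e ↦ f ↦ -e` on each of them. In an orthogonal group
every determinant is `±1`, so a reflection, an involution of determinant `-1`, is not a square.
-/

open SemidirectProduct Matrix
open scoped MatrixGroups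

/-- The antidiagonal permutation matrix `J₀`, `(J₀)_{ij} = δ_{i, n+1-j}`. -/
def J0 (k : Type*) [Field k] (m : ℕ) : Matrix (Fin (2 * m)) (Fin (2 * m)) k :=
  Matrix.of fun i j => if j = Fin.rev i then 1 else 0

/-- The diagonal matrix `t = diag(1, …, 1, −1, …, −1)` with `m` ones and `m` minus ones. -/
def tMat (k : Type*) [Field k] (m : ℕ) : Matrix (Fin (2 * m)) (Fin (2 * m)) k :=
  Matrix.diagonal fun i => if (i : ℕ) < m then (1 : k) else -1

open Module
open LinearMap (BilinForm)

namespace LinearMap.BilinForm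

section PairOrthogonal

variable {k V : Type*} [Field k] [AddCommGroup V] [Module k V] {ω : BilinForm k V} {e f : V}

def pairOrthogonal (ω : BilinForm k V) (e f : V) : Submodule k V :=
  LinearMap.ker (ω e) ⊓ LinearMap.ker (ω f)

lemma mem_pairOrthogonal {w : V} : w ∈ pairOrthogonal ω e f ↔ ω e w = 0 ∧ ω f w = 0 :=
  Iff.rfl

variable (hω : ω.IsAlt) (hef : ω e f = 1)
include hω hef

lemma apply_smul_add_smul_add {w w' : V} (hw : w ∈ pairOrthogonal ω e f)
    (hw' : w' ∈ pairOrthogonal ω e f) (s t s' t' : k) :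
    ω (s • e + t • f + w) (s' • e + t' • f + w') = s * t' - t * s' + ω w w' := by
  obtain ⟨hew, hfw⟩ := mem_pairOrthogonal.mp hw
  obtain ⟨hew', hfw'⟩ := mem_pairOrthogonal.mp hw'
  have hfe : ω f e = -1 := by rw [← hω.neg_eq, hef]
  have hwe : ω w e = 0 := by rw [← hω.neg_eq, hew, neg_zero]
  have hwf : ω w f = 0 := by rw [← hω.neg_eq, hfw, neg_zero]
  simp only [map_add, map_smul, LinearMap.add_apply, LinearMap.smul_apply, smul_eq_mul,
    hω.self_eq_zero, hef, hfe, hwe, hwf, hew', hfw']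
  ring

lemma left_apply_smul_add_smul_add {w : V} (hw : w ∈ pairOrthogonal ω e f) (s t : k) :
    ω e (s • e + t • f + w) = t := by
  simpa using apply_smul_add_smul_add hω hef (zero_mem _) hw 1 0 s t

lemma right_apply_smul_add_smul_add {w : V} (hw : w ∈ pairOrthogonal ω e f) (s t : k) :
    ω f (s • e + t • f + w) = -s := by
  simpa using apply_smul_add_smul_add hω hef (zero_mem _) hw 0 1 s t

def pairProj : V →ₗ[k] pairOrthogonal ω e f :=
  LinearMap.codRestrict _ (LinearMap.id + (ω f).smulRight e - (ω e).smulRight f) fun x => by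
    have hfe : ω f e = -1 := by rw [← hω.neg_eq, hef]
    constructor <;> simp [hω.self_eq_zero, hef, hfe]

lemma coe_pairProj_apply (x : V) :
    (pairProj hω hef x : V) = x + ω f x • e - ω e x • f :=
  rfl

lemma eq_smul_add_smul_add_pairProj (x : V) :
    x = (-ω f x) • e + ω e x • f + (pairProj hω hef x : V) := by
  rw [coe_pairProj_apply]
  module

lemma coe_pairProj_smul_add_smul_add {w : V} (hw : w ∈ pairOrthogonal ω e f) (s t : k) :
    (pairProj hω hef (s • e + t • f + w) : V) = w := by
  rw [coe_pairProj_apply, left_apply_smul_add_smul_add hω hef hw,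
    right_apply_smul_add_smul_add hω hef hw]
  module

lemma separatingLeft_restrict_pairOrthogonal (hsep : ω.SeparatingLeft) :
    (ω.restrict (pairOrthogonal ω e f)).SeparatingLeft := by
  intro w hw
  ext1
  refine hsep _ fun x => ?_
  have hx := apply_smul_add_smul_add hω hef w.2 (pairProj hω hef x).2 0 0 (-ω f x) (ω e x)
  rw [← eq_smul_add_smul_add_pairProj] at hx
  simp only [zero_smul, zero_add, zero_mul, sub_zero] at hx
  rw [hx]
  exact hw (pairProj hω hef x)

omit hω in
lemma finrank_pairOrthogonal_lt [FiniteDimensional k V] :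
    finrank k (pairOrthogonal ω e f) < finrank k V :=
  Submodule.finrank_lt fun htop => by
    have hf : f ∈ pairOrthogonal ω e f := htop ▸ Submodule.mem_top
    exact one_ne_zero (hef.symm.trans (mem_pairOrthogonal.mp hf).1)

omit hω hef in
lemma apply_mem_pairOrthogonal {a : Module.End k V} (ha : ω.IsOrthogonal a) (hae : a e = -e)
    (haf : a f = -f) {w : V} (hw : w ∈ pairOrthogonal ω e f) :
    a w ∈ pairOrthogonal ω e f := by
  obtain ⟨hew, hfw⟩ := mem_pairOrthogonal.mp hw
  have he := ha e w
  have hf := ha f w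
  rw [hae, map_neg, LinearMap.neg_apply, hew, neg_eq_zero] at he
  rw [haf, map_neg, LinearMap.neg_apply, hfw, neg_eq_zero] at hf
  exact mem_pairOrthogonal.mpr ⟨he, hf⟩

lemma exists_isOrthogonal_mul_self_eq_of_pairOrthogonal {a : Module.End k V} (hae : a e = -e)
    (haf : a f = -f) {c : Module.End k (pairOrthogonal ω e f)}
    (hc : (ω.restrict (pairOrthogonal ω e f)).IsOrthogonal c)
    (hc2 : ∀ w, (c (c w) : V) = a w) :
    ∃ c' : Module.End k V, ω.IsOrthogonal c' ∧ c' * c' = a := by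
  -- on the plane spanned by `e` and `f`, where `a = -1`, take the rotation `e ↦ f ↦ -e`
  set c' : Module.End k V := (-ω e).smulRight e + (-ω f).smulRight f +
    (pairOrthogonal ω e f).subtype ∘ₗ c ∘ₗ pairProj hω hef
  have hc'_apply : ∀ x, c' x = (-ω e x) • e + (-ω f x) • f + (c (pairProj hω hef x) : V) :=
    fun x => rfl
  have hpc' : ∀ x, pairProj hω hef (c' x) = c (pairProj hω hef x) := fun x => by
    ext1; rw [hc'_apply, coe_pairProj_smul_add_smul_add hω hef (c _).2]
  refine ⟨c', fun x y => ?_, LinearMap.ext fun x => ?_⟩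
  · have hcxy := hc (pairProj hω hef x) (pairProj hω hef y)
    simp only [LinearMap.BilinForm.restrict_apply, LinearMap.domRestrict_apply] at hcxy
    conv_rhs =>
      rw [eq_smul_add_smul_add_pairProj hω hef x, eq_smul_add_smul_add_pairProj hω hef y]
    rw [hc'_apply, hc'_apply, apply_smul_add_smul_add hω hef (c _).2 (c _).2,
      apply_smul_add_smul_add hω hef (pairProj _ _ _).2 (pairProj _ _ _).2, hcxy]
    ring
  · rw [Module.End.mul_apply, hc'_apply (c' x), hpc', hc2, hc'_apply,
      left_apply_smul_add_smul_add hω hef (c _).2, right_apply_smul_add_smul_add hω hef (c _).2]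
    conv_rhs => rw [eq_smul_add_smul_add_pairProj hω hef x]
    rw [map_add, map_add, map_smul, map_smul, hae, haf]
    module

end PairOrthogonal

section Symplectic

variable {k V : Type*} [Field k] [AddCommGroup V] [Module k V] {ω : BilinForm k V}

lemma exists_pair_of_isOrthogonal_involution (h2 : (2 : k) ≠ 0) (hsep : ω.SeparatingLeft)
    {a : Module.End k V} (ha : ω.IsOrthogonal a) (ha2 : a * a = 1) (ha1 : a ≠ 1) :
    ∃ e f, a e = -e ∧ a f = -f ∧ ω e f = 1 := by
  have hneg : ∀ x, a (x - a x) = -(x - a x) := fun x => by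
    rw [map_sub, ← Module.End.mul_apply, ha2, Module.End.one_apply, neg_sub]
  obtain ⟨v, hv⟩ : ∃ v, a v ≠ v := by
    by_contra! h
    exact ha1 (LinearMap.ext h)
  obtain ⟨e, hae, he0⟩ : ∃ e, a e = -e ∧ e ≠ 0 :=
    ⟨v - a v, hneg v, sub_ne_zero.mpr hv.symm⟩
  obtain ⟨y, hy⟩ : ∃ y, ω e y ≠ 0 := by
    by_contra! h
    exact he0 (hsep e h)
  have hey : ω e (y - a y) = 2 * ω e y := by
    have hay := ha e y
    rw [hae, map_neg, LinearMap.neg_apply] at hay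
    rw [map_sub]
    linear_combination hay
  refine ⟨e, (ω e (y - a y))⁻¹ • (y - a y), hae, by rw [map_smul, hneg y, smul_neg], ?_⟩
  rw [map_smul, smul_eq_mul, inv_mul_cancel₀ (by rw [hey]; exact mul_ne_zero h2 hy)]

theorem exists_isOrthogonal_mul_self_eq_of_involution [FiniteDimensional k V] (h2 : (2 : k) ≠ 0)
    (hω : ω.IsAlt) (hsep : ω.SeparatingLeft) {a : Module.End k V} (ha : ω.IsOrthogonal a)
    (ha2 : a * a = 1) : ∃ c : Module.End k V, ω.IsOrthogonal c ∧ c * c = a := by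
  induction hn : finrank k V using Nat.strong_induction_on generalizing V with
  | _ n ih =>
  by_cases ha1 : a = 1
  · exact ⟨1, fun _ _ => rfl, by rw [ha1, one_mul]⟩
  obtain ⟨e, f, hae, haf, hef⟩ := exists_pair_of_isOrthogonal_involution h2 hsep ha ha2 ha1
  have haW : ∀ w ∈ pairOrthogonal ω e f, a w ∈ pairOrthogonal ω e f :=
    fun w hw => apply_mem_pairOrthogonal ha hae haf hw
  have haW2 : a.restrict haW * a.restrict haW = 1 := LinearMap.ext fun w => Subtype.ext <| by
    rw [Module.End.mul_apply, LinearMap.coe_restrict_apply, LinearMap.coe_restrict_apply,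
      ← Module.End.mul_apply, ha2]
    rfl
  obtain ⟨c, hc, hc2⟩ := ih _ (hn ▸ finrank_pairOrthogonal_lt hef)
    (V := pairOrthogonal ω e f) (ω := ω.restrict _) (a := a.restrict haW) (fun w => hω w)
    (separatingLeft_restrict_pairOrthogonal hω hef hsep) (fun x y => ha x y) haW2 rfl
  exact exists_isOrthogonal_mul_self_eq_of_pairOrthogonal hω hef hae haf hc
    fun w => congrArg Subtype.val (LinearMap.congr_fun hc2 w)

end Symplectic

end LinearMap.BilinForm

namespace Matrix

variable {k n : Type*} [Field k] [Fintype n] [DecidableEq n]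

theorem exists_mul_mul_transpose_eq_mul_self_eq_of_transpose_eq_neg (h2 : (2 : k) ≠ 0)
    {N : Matrix n n k} (hN : Nᵀ = -N) (hNdet : IsUnit N.det) {a : Matrix n n k}
    (ha : a * N * aᵀ = N) (ha2 : a * a = 1) : ∃ c, c * N * cᵀ = N ∧ c * c = a := by
  have hω : (toBilin' N).IsAlt := fun x => by
    have hx : x ⬝ᵥ N *ᵥ x = -(x ⬝ᵥ N *ᵥ x) := by
      conv_lhs => rw [← neg_neg N, ← hN, neg_mulVec, dotProduct_neg, mulVec_transpose,
        dotProduct_comm, ← dotProduct_mulVec]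
    rw [toBilin'_apply']
    exact (mul_eq_zero.mp (by linear_combination hx : (2 : k) * _ = 0)).resolve_left h2
  have hsep : (toBilin' N).SeparatingLeft :=
    separatingLeft_toBilin'_iff.mpr (separatingLeft_iff_det_ne_zero.mpr hNdet.ne_zero)
  have hcomp : ∀ P : Matrix n n k, (toBilin' N).IsOrthogonal (toLin' P) ↔ Pᵀ * N * P = N :=
    fun P => by
      rw [← toBilin'.injective.eq_iff, ← toBilin'_comp]
      exact ⟨fun h => LinearMap.ext₂ h, fun h x y => LinearMap.congr_fun₂ h x y⟩
  obtain ⟨c, hc, hcc⟩ :=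
    LinearMap.BilinForm.exists_isOrthogonal_mul_self_eq_of_involution h2 hω hsep
      ((hcomp aᵀ).mpr (by rwa [transpose_transpose]))
    (by rw [Module.End.mul_eq_comp, ← toLin'_mul, ← transpose_mul, ha2, transpose_one,
      toLin'_one, Module.End.one_eq_id])
  refine ⟨(LinearMap.toMatrix' c)ᵀ, ?_, ?_⟩
  · rw [transpose_transpose, ← hcomp, toLin'_toMatrix']
    exact hc
  · rw [← transpose_mul, ← LinearMap.toMatrix'_mul, hcc, LinearMap.toMatrix'_toLin',
      transpose_transpose]

/-- The witness is the `B`-orthogonal reflection in a vector `v` with `vᵀ B v ≠ 0`. -/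
theorem exists_mul_mul_transpose_eq_mul_self_eq_one_det_eq_neg_one (h2 : (2 : k) ≠ 0)
    {B : Matrix n n k} (hB : B.IsSymm) (hB0 : B ≠ 0) :
    ∃ r, r * B * rᵀ = B ∧ r * r = 1 ∧ r.det = -1 := by
  have : Invertible (2 : k) := invertibleOfNonzero h2
  obtain ⟨v, hv⟩ := LinearMap.BilinForm.exists_bilinForm_self_ne_zero
    (toBilin'.map_ne_zero_iff.mpr hB0)
    (LinearMap.BilinForm.isSymm_iff.mp (isSymm_toBilin'_iff_isSymm.mpr hB))
  rw [toBilin'_apply'] at hv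
  set w := B *ᵥ v
  set c := 2 / (v ⬝ᵥ w)
  have hvB : v ᵥ* B = w := by rw [← mulVec_transpose, hB.eq]
  have hcβ : c * (v ⬝ᵥ w) = 2 := div_mul_cancel₀ 2 hv
  have hc : c * (c * (v ⬝ᵥ w)) = c + c := by rw [hcβ, mul_two]
  refine ⟨1 - c • vecMulVec w v, ?_, ?_, ?_⟩
  · simp only [transpose_sub, transpose_one, transpose_smul, transpose_vecMulVec, sub_mul, mul_sub,
      one_mul, mul_one, Matrix.smul_mul, Matrix.mul_smul, vecMulVec_mul, mul_vecMulVec B,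
      vecMul_vecMulVec, vecMulVec_smul, smul_smul, hvB, dotProduct_comm w v, hc, add_smul]
    abel
  · simp only [sub_mul, mul_sub, one_mul, mul_one, Matrix.smul_mul, Matrix.mul_smul,
      vecMulVec_mul_vecMulVec, vecMulVec_smul, smul_smul, hc, add_smul]
    abel
  · rw [sub_eq_add_neg, ← neg_smul, ← smul_vecMulVec, vecMulVec_eq Unit,
      det_one_add_replicateCol_mul_replicateRow, dotProduct_smul, smul_eq_mul, neg_mul, hcβ]
    norm_num

theorem det_mul_self_eq_one_of_mul_mul_transpose_eq {B d : Matrix n n k} (hB : IsUnit B.det)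
    (h : d * B * dᵀ = B) : d.det * d.det = 1 := by
  have hdet := congrArg det h
  rw [det_mul, det_mul, det_transpose] at hdet
  exact mul_right_cancel₀ hB.ne_zero (by linear_combination hdet)

theorem mul_transpose_inv_mul_inv_eq_iff {M : Matrix n n k} (hM : IsUnit M.det) (g : GL n k) :
    M * (↑g⁻¹ : Matrix n n k)ᵀ * M⁻¹ = g ↔
      (g : Matrix n n k) * M * (g : Matrix n n k)ᵀ = M := by
  set X := (↑g⁻¹ : Matrix n n k)ᵀ
  have hXg : X * (g : Matrix n n k)ᵀ = 1 := by
    rw [← transpose_mul, Units.mul_inv, transpose_one]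
  have hgX : (g : Matrix n n k)ᵀ * X = 1 := by
    rw [← transpose_mul, Units.inv_mul, transpose_one]
  constructor
  · intro h
    calc (g : Matrix n n k) * M * (g : Matrix n n k)ᵀ
        = M * X * M⁻¹ * M * (g : Matrix n n k)ᵀ := by rw [h]
      _ = M := by rw [nonsing_inv_mul_cancel_right M _ hM, mul_assoc, hXg, mul_one]
  · intro h
    calc M * X * M⁻¹ = ↑g * M * (g : Matrix n n k)ᵀ * X * M⁻¹ := by rw [h]
      _ = g := by
        rw [mul_assoc _ (g : Matrix n n k)ᵀ, hgX, mul_one, mul_nonsing_inv_cancel_right M _ hM]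

theorem isSymm_mul_of_mul_mul_transpose_inv_mul_inv_eq_one {M : Matrix n n k} (hM : M.IsSymm)
    (hMdet : IsUnit M.det) {g : GL n k}
    (h : (g : Matrix n n k) * (M * (↑g⁻¹ : Matrix n n k)ᵀ * M⁻¹) = 1) :
    ((g : Matrix n n k) * M).IsSymm := by
  set X := (↑g⁻¹ : Matrix n n k)ᵀ
  have hXg : X * (g : Matrix n n k)ᵀ = 1 := by
    rw [← transpose_mul, Units.mul_inv, transpose_one]
  have hgMX : (g : Matrix n n k) * M * X = M := by
    calc _ = (g : Matrix n n k) * (M * X * M⁻¹) * M := by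
          rw [← mul_assoc, nonsing_inv_mul_cancel_right M _ hMdet, mul_assoc]
      _ = M := by rw [h, one_mul]
  have hcomm : (g : Matrix n n k) * M = M * (g : Matrix n n k)ᵀ := by
    calc _ = (g : Matrix n n k) * M * X * (g : Matrix n n k)ᵀ := by
          rw [mul_assoc _ X, hXg, mul_one]
      _ = M * (g : Matrix n n k)ᵀ := by rw [hgMX]
  rw [IsSymm, transpose_mul, hM.eq, hcomm]

end Matrix

theorem MulEquiv.exists_fixed_mul_self_eq {G H : Type*} [Group G] [Group H] (φ : G ≃* H)
    {σ : G → G} {θ : H → H} (hφ : ∀ g, φ (σ g) = θ (φ g))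
    (hσ : ∀ a, σ a = a → a * a = 1 → ∃ c, σ c = c ∧ c * c = a) {r : H} (hr : θ r = r)
    (hr2 : r * r = 1) : ∃ d, θ d = d ∧ d * d = r := by
  obtain ⟨c, hc, hcc⟩ := hσ (φ.symm r)
    (φ.injective (by rw [hφ, MulEquiv.apply_symm_apply, hr]))
    (by rw [← map_mul, hr2, map_one])
  exact ⟨φ c, by rw [← hφ, hc], by rw [← map_mul, hcc, MulEquiv.apply_symm_apply]⟩

namespace SemidirectProduct

variable {N N' : Type*} [Group N] [Group N'] {ψ : Multiplicative (ZMod 2) →* MulAut N}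
  {ψ' : Multiplicative (ZMod 2) →* MulAut N'}

theorem right_apply_inr_ofAdd_one
    (e : N ⋊[ψ] Multiplicative (ZMod 2) ≃* N' ⋊[ψ'] Multiplicative (ZMod 2))
    (φ : N →* N')
    (he : ∀ g, e (inl g) = inl (φ g)) :
    (e (inr (Multiplicative.ofAdd 1))).right = Multiplicative.ofAdd 1 := by
  have hright : ∀ x, (e x).right = (e (inr x.right)).right := fun x => by
    conv_lhs => rw [← inl_left_mul_inr_right x]
    rw [map_mul, mul_right, he, right_inl, one_mul]
  obtain ⟨x, hx⟩ := e.surjective (inr (Multiplicative.ofAdd 1))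
  have hx' := hright x
  rw [hx, right_inr] at hx'
  obtain h | h : x.right = 1 ∨ x.right = Multiplicative.ofAdd 1 := by
    generalize x.right = z
    revert z
    decide
  · rw [h, map_one (inr : Multiplicative (ZMod 2) →* N ⋊[ψ] _), map_one e, one_right] at hx'
    exact absurd hx' (by decide)
  · rw [h] at hx'
    exact hx'.symm

theorem exists_mul_apply_eq_one_and_conj
    (e : N ⋊[ψ] Multiplicative (ZMod 2) ≃* N' ⋊[ψ'] Multiplicative (ZMod 2))
    (φ : N →* N')
    (he : ∀ g, e (inl g) = inl (φ g)) :
    ∃ y : N', y * ψ' (Multiplicative.ofAdd 1) y = 1 ∧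
      ∀ g, φ (ψ (Multiplicative.ofAdd 1) g) =
        y * ψ' (Multiplicative.ofAdd 1) (φ g) * y⁻¹ := by
  set u := e (inr (Multiplicative.ofAdd 1)) with hu_def
  have hu : u.right = Multiplicative.ofAdd 1 := right_apply_inr_ofAdd_one e φ he
  refine ⟨u.left, ?_, fun g => inl_injective (φ := ψ') ?_⟩
  · have huu : u * u = 1 := by
      rw [← map_mul, ← map_mul,
        show Multiplicative.ofAdd (1 : ZMod 2) * Multiplicative.ofAdd 1 = 1 from rfl, map_one,
        map_one]
    simpa only [mul_left, hu, one_left] using congrArg left huu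
  · have hconj := congrArg e (inl_aut (φ := ψ) (Multiplicative.ofAdd 1) g)
    simp only [he, map_mul, map_inv, ← hu_def] at hconj
    rw [hconj]
    conv_lhs => rw [← inl_left_mul_inr_right u, hu]
    simp only [map_mul, map_inv, inl_aut]
    group

end SemidirectProduct

namespace Matrix.GeneralLinearGroup

variable {k n : Type*} [Field k] [Fintype n] [DecidableEq n]

theorem exists_mul_mul_transpose_eq_mul_self_eq_of_transpose_eq_neg
    (h2 : (2 : k) ≠ 0) {N : Matrix n n k} (hN : Nᵀ = -N) (hNdet : IsUnit N.det) {a : GL n k}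
    (ha : (a : Matrix n n k) * N * (a : Matrix n n k)ᵀ = N) (ha2 : a * a = 1) :
    ∃ c : GL n k, (c : Matrix n n k) * N * (c : Matrix n n k)ᵀ = N ∧ c * c = a := by
  obtain ⟨c, hc, hcc⟩ :=
    Matrix.exists_mul_mul_transpose_eq_mul_self_eq_of_transpose_eq_neg h2 hN hNdet ha
      (by simpa only [Units.val_mul, Units.val_one] using congrArg Units.val ha2)
  have hcdet : IsUnit c.det := isUnit_of_mul_isUnit_left (y := c.det) <| by
    rw [← det_mul, hcc]
    exact (isUnit_iff_isUnit_det _).mp a.isUnit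
  exact ⟨Matrix.nonsingInvUnit c hcdet, hc, Units.ext hcc⟩

theorem not_exists_mulEquiv_intertwining (h2 : (2 : k) ≠ 0) [Nonempty n] {J B : Matrix n n k}
    (hJ : Jᵀ = -J) (hJdet : IsUnit J.det) (hB : B.IsSymm) (hBdet : IsUnit B.det)
    {σ θ : GL n k → GL n k}
    (hσ : ∀ g, (σ g : Matrix n n k) = J * (↑g⁻¹ : Matrix n n k)ᵀ * J⁻¹)
    (hθ : ∀ g, (θ g : Matrix n n k) = B * (↑g⁻¹ : Matrix n n k)ᵀ * B⁻¹) :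
    ¬ ∃ φ : GL n k ≃* GL n k, ∀ g, φ (σ g) = θ (φ g) := by
  rintro ⟨φ, hφ⟩
  have hσ_fixed : ∀ g, σ g = g ↔ (g : Matrix n n k) * J * (g : Matrix n n k)ᵀ = J :=
    fun g => Units.ext_iff.trans (by rw [hσ]; exact mul_transpose_inv_mul_inv_eq_iff hJdet g)
  have hθ_fixed : ∀ g, θ g = g ↔ (g : Matrix n n k) * B * (g : Matrix n n k)ᵀ = B :=
    fun g => Units.ext_iff.trans (by rw [hθ]; exact mul_transpose_inv_mul_inv_eq_iff hBdet g)
  obtain ⟨r, hrB, hr2, hrdet⟩ :=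
    exists_mul_mul_transpose_eq_mul_self_eq_one_det_eq_neg_one h2 hB
    fun h0 => hBdet.ne_zero (by rw [h0, det_zero])
  obtain ⟨d, hd, hdd⟩ := φ.exists_fixed_mul_self_eq hφ
    (fun a ha ha2 => by
      obtain ⟨c, hc, hcc⟩ :=
        exists_mul_mul_transpose_eq_mul_self_eq_of_transpose_eq_neg h2 hJ hJdet
          ((hσ_fixed a).mp ha) ha2
      exact ⟨c, (hσ_fixed c).mpr hc, hcc⟩)
    (r := ⟨r, r, hr2, hr2⟩) ((hθ_fixed _).mpr hrB) (Units.ext hr2)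
  have hdet := det_mul_self_eq_one_of_mul_mul_transpose_eq hBdet ((hθ_fixed d).mp hd)
  rw [← det_mul, ← Units.val_mul, hdd] at hdet
  exact h2 (by linear_combination hrdet - (hdet : r.det = 1))

end Matrix.GeneralLinearGroup

section Antidiagonal

variable (k : Type*) [Field k] (m : ℕ)

lemma J0_mul_J0 : J0 k m * J0 k m = 1 := by
  ext i j
  simp only [J0, Matrix.mul_apply, Matrix.of_apply, Matrix.one_apply, mul_ite, mul_one, mul_zero]
  simp [@eq_comm _ j, Fin.rev_eq_iff]

lemma J0_transpose : (J0 k m)ᵀ = J0 k m := by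
  ext i j
  simp only [J0, Matrix.transpose_apply, Matrix.of_apply, @eq_comm _ j, Fin.rev_eq_iff]

lemma J0_mul_tMat : J0 k m * tMat k m = -(tMat k m * J0 k m) := by
  ext i j
  simp only [tMat, J0, Matrix.mul_diagonal, Matrix.diagonal_mul, Matrix.neg_apply, Matrix.of_apply]
  split_ifs <;> grind

lemma tMat_mul_tMat : tMat k m * tMat k m = 1 := by
  rw [tMat, Matrix.diagonal_mul_diagonal, ← Matrix.diagonal_one]
  congr
  ext i
  split_ifs <;> norm_num

lemma transpose_tMat_mul_J0 : (tMat k m * J0 k m)ᵀ = -(tMat k m * J0 k m) := by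
  rw [Matrix.transpose_mul, J0_transpose, tMat, Matrix.diagonal_transpose, ← tMat, J0_mul_tMat]

lemma tMat_mul_J0_mul_self : tMat k m * J0 k m * (tMat k m * J0 k m) = -1 := by
  rw [mul_assoc, ← mul_assoc (J0 k m), J0_mul_tMat, Matrix.neg_mul, Matrix.mul_neg, mul_assoc,
    J0_mul_J0, mul_one, tMat_mul_tMat]

end Antidiagonal

theorem stmt13_general {k : Type*} [Field k] (hchar : (2 : k) ≠ 0)
    (m : ℕ) (hm : 0 < m)
    (σs σo : MulAut (GL (Fin (2 * m)) k))
    (hσs : ∀ g : GL (Fin (2 * m)) k,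
      ((σs g : GL (Fin (2 * m)) k) : Matrix (Fin (2 * m)) (Fin (2 * m)) k)
        = (tMat k m * J0 k m) *
            (((g⁻¹ : GL (Fin (2 * m)) k) : Matrix (Fin (2 * m)) (Fin (2 * m)) k))ᵀ *
            (tMat k m * J0 k m)⁻¹)
    (hσo : ∀ g : GL (Fin (2 * m)) k,
      ((σo g : GL (Fin (2 * m)) k) : Matrix (Fin (2 * m)) (Fin (2 * m)) k)
        = J0 k m *
            (((g⁻¹ : GL (Fin (2 * m)) k) : Matrix (Fin (2 * m)) (Fin (2 * m)) k))ᵀ *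
            (J0 k m)⁻¹)
    (ψs ψo : Multiplicative (ZMod 2) →* MulAut (GL (Fin (2 * m)) k))
    (hψs : ψs (Multiplicative.ofAdd 1) = σs)
    (hψo : ψo (Multiplicative.ofAdd 1) = σo) :
    ¬ ∃ (e : (GL (Fin (2 * m)) k ⋊[ψs] Multiplicative (ZMod 2)) ≃*
             (GL (Fin (2 * m)) k ⋊[ψo] Multiplicative (ZMod 2)))
        (φ : GL (Fin (2 * m)) k ≃* GL (Fin (2 * m)) k),
        ∀ g : GL (Fin (2 * m)) k, e (inl g) = inl (φ g) := by
  rintro ⟨e, φ, hφ⟩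
  obtain ⟨Y, hY, hconj⟩ :=
    SemidirectProduct.exists_mul_apply_eq_one_and_conj e φ.toMonoidHom hφ
  simp only [hψs, hψo, MulEquiv.coe_toMonoidHom] at hY hconj
  have hJ0 : IsUnit (J0 k m).det := isUnit_det_of_right_inverse (J0_mul_J0 k m)
  have hJ : IsUnit (tMat k m * J0 k m).det :=
    isUnit_det_of_right_inverse (B := -(tMat k m * J0 k m))
      (by rw [Matrix.mul_neg, tMat_mul_J0_mul_self, neg_neg])
  have hB : IsUnit ((Y : Matrix _ _ k) * J0 k m).det := by
    rw [det_mul]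
    exact ((isUnit_iff_isUnit_det _).mp Y.isUnit).mul hJ0
  have hθ : ∀ g, ((Y * σo g * Y⁻¹ : GL _ k) : Matrix _ _ k) =
      ((Y : Matrix _ _ k) * J0 k m) * (↑g⁻¹ : Matrix _ _ k)ᵀ *
        ((Y : Matrix _ _ k) * J0 k m)⁻¹ := by
    intro g
    rw [Units.val_mul, Units.val_mul, hσo, coe_units_inv Y, Matrix.mul_inv_rev]
    simp only [mul_assoc]
  have : Nonempty (Fin (2 * m)) := ⟨⟨0, by omega⟩⟩
  exact GeneralLinearGroup.not_exists_mulEquiv_intertwining hchar (transpose_tMat_mul_J0 k m) hJ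
    (isSymm_mul_of_mul_mul_transpose_inv_mul_inv_eq_one (J0_transpose k m) hJ0
      (by rw [← hσo, ← Units.val_mul, hY, Units.val_one])) hB hσs hθ ⟨φ, hconj⟩

/-- for `G = GL_{2m}(k)`, `σ_s g = J (gᵀ)⁻¹ J⁻¹` with `J = t * J₀`
(symplectic type) and `σ_o g = J₀ (gᵀ)⁻¹ J₀⁻¹` (orthogonal type), the semidirect
products `G⋊⟨σ_s⟩` and `G⋊⟨σ_o⟩` are not isomorphic via any isomorphism restricting to
an automorphism (in particular the identity) of `G`. -/
theorem stmt13 {k : Type*} [Field k] [IsAlgClosed k] (hchar : (2 : k) ≠ 0)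
    (m : ℕ) (hm : 0 < m)
    (σs σo : MulAut (GL (Fin (2 * m)) k))
    (hσs : ∀ g : GL (Fin (2 * m)) k,
      ((σs g : GL (Fin (2 * m)) k) : Matrix (Fin (2 * m)) (Fin (2 * m)) k)
        = (tMat k m * J0 k m) *
            (((g⁻¹ : GL (Fin (2 * m)) k) : Matrix (Fin (2 * m)) (Fin (2 * m)) k))ᵀ *
            (tMat k m * J0 k m)⁻¹)
    (hσo : ∀ g : GL (Fin (2 * m)) k,
      ((σo g : GL (Fin (2 * m)) k) : Matrix (Fin (2 * m)) (Fin (2 * m)) k)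
        = J0 k m *
            (((g⁻¹ : GL (Fin (2 * m)) k) : Matrix (Fin (2 * m)) (Fin (2 * m)) k))ᵀ *
            (J0 k m)⁻¹)
    (ψs ψo : Multiplicative (ZMod 2) →* MulAut (GL (Fin (2 * m)) k))
    (hψs : ψs (Multiplicative.ofAdd 1) = σs)
    (hψo : ψo (Multiplicative.ofAdd 1) = σo) :
    ¬ ∃ (e : (GL (Fin (2 * m)) k ⋊[ψs] Multiplicative (ZMod 2)) ≃*
             (GL (Fin (2 * m)) k ⋊[ψo] Multiplicative (ZMod 2)))
        (φ : GL (Fin (2 * m)) k ≃* GL (Fin (2 * m)) k),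
        ∀ g : GL (Fin (2 * m)) k, e (inl g) = inl (φ g) :=
  stmt13_general hchar m hm σs σo hσs hσo ψs ψo hψs hψo
end
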